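/- The elementary real numbers are closed under the field operations: if α and β are nonnegative elementary real numbers, then α + β and α·β are elementary; if moreover α ≥ β then α − β is elementary; and if α > 0 then 1/α is elementary. -/

import Mathlib

/-- The class of elementary functions `ℕ^n → ℕ`: the smallest class containing the
zero function, successor, projections, addition, multiplication and truncated
subtraction, and closed under composition, bounded summation and bounded product. -/
inductive Elem : ∀ {n : ℕ}, ((Fin n → ℕ) → ℕ) → Prop
  | zero {n : ℕ} : Elem (fun _ : Fin n → ℕ => 0)
  | succ : Elem (fun x : Fin 1 → ℕ => x 0 + 1)
  | proj {n : ℕ} (i : Fin n) : Elem (fun x : Fin n → ℕ => x i)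
  | add : Elem (fun x : Fin 2 → ℕ => x 0 + x 1)
  | mul : Elem (fun x : Fin 2 → ℕ => x 0 * x 1)
  | tsub : Elem (fun x : Fin 2 → ℕ => x 0 - x 1)
  | comp {m n : ℕ} {f : (Fin m → ℕ) → ℕ} {g : Fin m → (Fin n → ℕ) → ℕ} :
      Elem f → (∀ i, Elem (g i)) → Elem (fun x => f (fun i => g i x))
  | bsum {n : ℕ} {f : (Fin (n + 1) → ℕ) → ℕ} : Elem f →
      Elem (fun x : Fin (n + 1) → ℕ =>
        ∑ t ∈ Finset.range (x 0 + 1), f (Fin.cons t (fun i => x i.succ)))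
  | bprod {n : ℕ} {f : (Fin (n + 1) → ℕ) → ℕ} : Elem f →
      Elem (fun x : Fin (n + 1) → ℕ =>
        ∏ t ∈ Finset.range (x 0 + 1), f (Fin.cons t (fun i => x i.succ)))

/-- A one-variable function `ℕ → ℕ` is elementary. -/
def Elem1 (f : ℕ → ℕ) : Prop :=
  Elem (fun x : Fin 1 → ℕ => f (x 0))

/-- A (nonnegative) real number is elementary if it is approximated, with an
elementary modulus, by an elementary rational Cauchy sequence. -/
def ElemReal (α : ℝ) : Prop :=
  ∃ a b c : ℕ → ℕ, Elem1 a ∧ Elem1 b ∧ Elem1 c ∧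
    ∀ k : ℕ, 1 ≤ k → ∀ x : ℕ, c k ≤ x →
      |(a x : ℝ) / ((b x : ℝ) + 1) - α| < 1 / (k : ℝ)

/-!
Represent an elementary real by an elementary sequence of fractions `a x / (b x + 1)` converging
to it with an elementary modulus. Sums, products, truncated differences and (eventually)
reciprocals of such fractions are again such fractions, because a common denominator
`(b₁ + 1)(b₂ + 1)` is of the form `b + 1` with `b = b₁ b₂ + b₁ + b₂`. On the analytic side,
every field operation changes the error by at most a constant factor `K` (eventually), so
evaluating the given moduli at `2 (⌈K⌉ + 1) k` yields a modulus for the result.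
-/

open Filter Topology

namespace Elem1

variable {f g : ℕ → ℕ}

theorem id : Elem1 fun x => x := Elem.proj 0

theorem const : ∀ n : ℕ, Elem1 fun _ => n
  | 0 => Elem.zero
  | n + 1 => Elem.comp (g := fun _ _ => n) Elem.succ fun _ => const n

theorem comp (hf : Elem1 f) (hg : Elem1 g) : Elem1 fun x => f (g x) :=
  Elem.comp (g := fun _ x => g (x 0)) hf fun _ => hg

theorem comp₂ {h : ℕ → ℕ → ℕ} (hh : Elem fun x : Fin 2 → ℕ => h (x 0) (x 1))
    (hf : Elem1 f) (hg : Elem1 g) : Elem1 fun x => h (f x) (g x) :=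
  Elem.comp (g := ![fun x => f (x 0), fun x => g (x 0)]) hh fun i => by
    fin_cases i
    exacts [hf, hg]

theorem add (hf : Elem1 f) (hg : Elem1 g) : Elem1 fun x => f x + g x := comp₂ Elem.add hf hg

theorem mul (hf : Elem1 f) (hg : Elem1 g) : Elem1 fun x => f x * g x := comp₂ Elem.mul hf hg

theorem tsub (hf : Elem1 f) (hg : Elem1 g) : Elem1 fun x => f x - g x := comp₂ Elem.tsub hf hg

theorem max (hf : Elem1 f) (hg : Elem1 g) : Elem1 fun x => max (f x) (g x) := by
  have h : (fun x => Max.max (f x) (g x)) = fun x => f x + (g x - f x) :=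
    funext fun x => by omega
  rw [h]
  exact hf.add (hg.tsub hf)

end Elem1

def TendstoElem (q : ℕ → ℝ) (α : ℝ) : Prop :=
  ∃ c : ℕ → ℕ, Elem1 c ∧ ∀ k : ℕ, 1 ≤ k → ∀ x : ℕ, c k ≤ x → |q x - α| < 1 / (k : ℝ)

def ElemFracSeq (q : ℕ → ℝ) : Prop :=
  ∃ a b : ℕ → ℕ, Elem1 a ∧ Elem1 b ∧ ∀ x, q x = a x / ((b x : ℝ) + 1)

theorem elemReal_iff {α : ℝ} : ElemReal α ↔ ∃ q, ElemFracSeq q ∧ TendstoElem q α := by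
  constructor
  · rintro ⟨a, b, c, ha, hb, hc, h⟩
    exact ⟨_, ⟨a, b, ha, hb, fun _ => rfl⟩, c, hc, h⟩
  · rintro ⟨q, ⟨a, b, ha, hb, hq⟩, c, hc, h⟩
    exact ⟨a, b, c, ha, hb, hc, fun k hk x hx => hq x ▸ h k hk x hx⟩

namespace TendstoElem

variable {q r s : ℕ → ℝ} {α β γ : ℝ}

theorem tendsto (hq : TendstoElem q α) : Tendsto q atTop (𝓝 α) := by
  obtain ⟨c, -, h⟩ := hq
  refine Metric.tendsto_atTop.2 fun ε hε => ?_
  obtain ⟨n, hn⟩ := exists_nat_one_div_lt hε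
  refine ⟨c (n + 1), fun x hx => ?_⟩
  have hx' := h (n + 1) n.succ_pos x hx
  rw [Nat.cast_succ] at hx'
  exact (Real.dist_eq _ _).trans_lt (hx'.trans hn)

theorem of_eventually_abs_sub_le₂ (hq : TendstoElem q α) (hr : TendstoElem r β) (K : ℝ)
    (h : ∀ᶠ x in atTop, |s x - γ| ≤ K * (|q x - α| + |r x - β|)) : TendstoElem s γ := by
  obtain ⟨cq, hcq, hq⟩ := hq
  obtain ⟨cr, hcr, hr⟩ := hr
  obtain ⟨N, hN⟩ := eventually_atTop.1 h
  set L := ⌈K⌉₊ + 1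
  have hKL : K ≤ L := (Nat.le_ceil K).trans (by simp [L])
  have hL : (0 : ℝ) < L := by positivity
  refine ⟨fun k => max N (max (cq (2 * L * k)) (cr (2 * L * k))), ?_, fun k hk x hx => ?_⟩
  · have hscale : Elem1 fun k => 2 * L * k := (Elem1.const _).mul Elem1.id
    exact (Elem1.const N).max ((hcq.comp hscale).max (hcr.comp hscale))
  simp only [max_le_iff] at hx
  have hLk : 1 ≤ 2 * L * k := Nat.one_le_iff_ne_zero.2 (by positivity)
  have hqx := hq _ hLk x hx.2.1
  have hrx := hr _ hLk x hx.2.2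
  push_cast at hqx hrx
  have hk' : (0 : ℝ) < k := by exact_mod_cast hk
  calc |s x - γ| ≤ K * (|q x - α| + |r x - β|) := hN x hx.1
    _ ≤ L * (|q x - α| + |r x - β|) := by gcongr
    _ < L * (1 / (2 * L * k) + 1 / (2 * L * k)) := by gcongr
    _ = 1 / k := by field_simp; norm_num

theorem of_eventually_abs_sub_le (hq : TendstoElem q α) (K : ℝ)
    (h : ∀ᶠ x in atTop, |s x - γ| ≤ K * |q x - α|) : TendstoElem s γ :=
  hq.of_eventually_abs_sub_le₂ hq (K / 2) <| h.mono fun x hx => by linarith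

theorem congr (hq : TendstoElem q α) (h : q =ᶠ[atTop] r) : TendstoElem r α :=
  hq.of_eventually_abs_sub_le 1 <| h.mono fun x hx => by simp [hx]

theorem max_const (hq : TendstoElem q α) (t : ℝ) :
    TendstoElem (fun x => max (q x) t) (max α t) :=
  hq.of_eventually_abs_sub_le 1 <| .of_forall fun x => by
    simpa using abs_max_sub_max_le_abs (q x) α t

theorem add (hq : TendstoElem q α) (hr : TendstoElem r β) :
    TendstoElem (fun x => q x + r x) (α + β) :=
  hq.of_eventually_abs_sub_le₂ hr 1 <| .of_forall fun x => by
    simpa only [one_mul, add_sub_add_comm] using abs_add_le (q x - α) (r x - β)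

theorem sub (hq : TendstoElem q α) (hr : TendstoElem r β) :
    TendstoElem (fun x => q x - r x) (α - β) :=
  hq.of_eventually_abs_sub_le₂ hr 1 <| .of_forall fun x => by
    simpa only [one_mul, sub_sub_sub_comm] using abs_sub (q x - α) (r x - β)

theorem mul (hq : TendstoElem q α) (hr : TendstoElem r β) :
    TendstoElem (fun x => q x * r x) (α * β) := by
  have hbound : ∀ᶠ x in atTop, |q x| < |α| + 1 :=
    hq.tendsto.abs.eventually (gt_mem_nhds (lt_add_one _))
  refine hq.of_eventually_abs_sub_le₂ hr (|α| + 1 + |β|) <| hbound.mono fun x hx => ?_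
  calc |q x * r x - α * β| = |q x * (r x - β) + β * (q x - α)| := by ring_nf
    _ ≤ |q x| * |r x - β| + |β| * |q x - α| := by
      simpa only [abs_mul] using abs_add_le (q x * (r x - β)) (β * (q x - α))
    _ ≤ (|α| + 1 + |β|) * (|q x - α| + |r x - β|) := by
      nlinarith [abs_nonneg α, abs_nonneg β, abs_nonneg (q x - α), abs_nonneg (r x - β)]

theorem inv (hq : TendstoElem q α) (hα : α ≠ 0) :
    TendstoElem (fun x => (q x)⁻¹) α⁻¹ := by
  have hα' : 0 < |α| := abs_pos.2 hα
  have hbound : ∀ᶠ x in atTop, |α| / 2 < |q x| :=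
    hq.tendsto.abs.eventually (lt_mem_nhds (half_lt_self hα'))
  refine hq.of_eventually_abs_sub_le (2 / |α| ^ 2) <| hbound.mono fun x hx => ?_
  have hqx : q x ≠ 0 := abs_pos.1 ((half_pos hα').trans hx)
  rw [inv_sub_inv hqx hα, abs_div, abs_mul, abs_sub_comm, div_le_iff₀ (by positivity)]
  have hscale : 1 ≤ 2 / |α| ^ 2 * (|q x| * |α|) := by
    rw [div_mul_eq_mul_div, le_div_iff₀ (by positivity)]
    nlinarith
  nlinarith [mul_le_mul_of_nonneg_left hscale (abs_nonneg (q x - α))]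

end TendstoElem

theorem Nat.cast_tsub_eq_max {R : Type*} [Ring R] [LinearOrder R] [IsOrderedRing R] (m n : ℕ) :
    ((m - n : ℕ) : R) = max ((m : R) - n) 0 := by
  rcases le_total n m with h | h
  · rw [Nat.cast_sub h, max_eq_left (sub_nonneg.2 (Nat.mono_cast h))]
  · rw [Nat.sub_eq_zero_of_le h, Nat.cast_zero, max_eq_right (sub_nonpos.2 (Nat.mono_cast h))]

namespace ElemFracSeq

variable {q r : ℕ → ℝ}

theorem of_mul_denom {a b₁ b₂ : ℕ → ℕ} (ha : Elem1 a) (hb₁ : Elem1 b₁) (hb₂ : Elem1 b₂)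
    (h : ∀ x, q x * (((b₁ x : ℝ) + 1) * ((b₂ x : ℝ) + 1)) = a x) : ElemFracSeq q :=
  ⟨a, fun x => b₁ x * b₂ x + b₁ x + b₂ x, ha, (hb₁.mul hb₂).add hb₁ |>.add hb₂, fun x => by
    rw [eq_div_iff (by positivity), ← h x]
    push_cast
    ring⟩

theorem add (hq : ElemFracSeq q) (hr : ElemFracSeq r) : ElemFracSeq fun x => q x + r x := by
  obtain ⟨a₁, b₁, ha₁, hb₁, hq⟩ := hq
  obtain ⟨a₂, b₂, ha₂, hb₂, hr⟩ := hr
  refine of_mul_denom (a := fun x => a₁ x * (b₂ x + 1) + a₂ x * (b₁ x + 1))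
    ((ha₁.mul (hb₂.add (.const 1))).add (ha₂.mul (hb₁.add (.const 1)))) hb₁ hb₂ fun x => ?_
  rw [hq, hr]
  push_cast
  field_simp

theorem mul (hq : ElemFracSeq q) (hr : ElemFracSeq r) : ElemFracSeq fun x => q x * r x := by
  obtain ⟨a₁, b₁, ha₁, hb₁, hq⟩ := hq
  obtain ⟨a₂, b₂, ha₂, hb₂, hr⟩ := hr
  refine of_mul_denom (a := fun x => a₁ x * a₂ x) (ha₁.mul ha₂) hb₁ hb₂ fun x => ?_
  rw [hq, hr]
  push_cast
  field_simp

theorem max_sub_zero (hq : ElemFracSeq q) (hr : ElemFracSeq r) :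
    ElemFracSeq fun x => max (q x - r x) 0 := by
  obtain ⟨a₁, b₁, ha₁, hb₁, hq⟩ := hq
  obtain ⟨a₂, b₂, ha₂, hb₂, hr⟩ := hr
  refine of_mul_denom (a := fun x => a₁ x * (b₂ x + 1) - a₂ x * (b₁ x + 1))
    ((ha₁.mul (hb₂.add (.const 1))).tsub (ha₂.mul (hb₁.add (.const 1)))) hb₁ hb₂ fun x => ?_
  rw [Nat.cast_tsub_eq_max, max_mul_of_nonneg _ _ (by positivity), zero_mul, hq, hr]
  push_cast
  congr 1
  field_simp

theorem exists_eq_inv_of_ne_zero (hq : ElemFracSeq q) :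
    ∃ r, ElemFracSeq r ∧ ∀ x, q x ≠ 0 → r x = (q x)⁻¹ := by
  obtain ⟨a, b, ha, hb, hq⟩ := hq
  refine ⟨_, ⟨fun x => b x + 1, fun x => a x - 1, hb.add (.const 1), ha.tsub (.const 1),
    fun _ => rfl⟩, fun x hx => ?_⟩
  have hax : 1 ≤ a x := Nat.one_le_iff_ne_zero.2 fun h => hx (by simp [hq, h])
  rw [hq, inv_div, Nat.cast_sub hax]
  push_cast
  ring_nf

end ElemFracSeq

theorem elemReal_field_ops_general (α β : ℝ)
    (hα : ElemReal α) (hβ : ElemReal β) :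
    ElemReal (α + β) ∧ ElemReal (α * β) ∧
      (β ≤ α → ElemReal (α - β)) ∧ (0 < α → ElemReal (1 / α)) := by
  obtain ⟨q, hq, hqα⟩ := elemReal_iff.1 hα
  obtain ⟨r, hr, hrβ⟩ := elemReal_iff.1 hβ
  refine ⟨elemReal_iff.2 ⟨_, hq.add hr, hqα.add hrβ⟩, elemReal_iff.2 ⟨_, hq.mul hr, hqα.mul hrβ⟩,
    fun hβα => ?_, fun hα₀ => ?_⟩
  · rw [← max_eq_left (sub_nonneg.2 hβα)]
    exact elemReal_iff.2 ⟨_, hq.max_sub_zero hr, (hqα.sub hrβ).max_const 0⟩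
  · rw [one_div]
    obtain ⟨s, hs, hsq⟩ := hq.exists_eq_inv_of_ne_zero
    refine elemReal_iff.2 ⟨s, hs, (hqα.inv hα₀.ne').congr ?_⟩
    filter_upwards [hqα.tendsto.eventually_ne hα₀.ne'] with x hx using (hsq x hx).symm

/-- The elementary real numbers are closed under the field
operations: sums, products, differences (when nonnegative) and reciprocals
(when positive) of nonnegative elementary reals are elementary. -/
theorem elemReal_field_ops (α β : ℝ) (hα0 : 0 ≤ α) (hβ0 : 0 ≤ β)
    (hα : ElemReal α) (hβ : ElemReal β) :
    ElemReal (α + β) ∧ ElemReal (α * β) ∧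
      (β ≤ α → ElemReal (α - β)) ∧ (0 < α → ElemReal (1 / α)) :=
  elemReal_field_ops_general α β hα hβ
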